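/- arXiv:2008.03255 — 2 statements merged into one kernel-verified Lean document; each statement's English description precedes it below -/
import Mathlib

section
/- For the probability measure P on ℝ with P({j}) = 1/2^j for j ∈ {1,2,3,4,5} and P({6}) = 1/2^5, the fifth quantization error equals 1/64, attained at the set {1, 2, 3, 4, 11/2}. -/
/-- Mass function: f(j) = 1/2^j for j = 1,…,5 and f(6) = 1/2^5. -/
noncomputable def massA (j : ℕ) : ℝ := if j = 6 then 1/2^5 else 1/2^j

/-- Distortion error of a nonempty finite set α for the measure with mass `massA`. -/
noncomputable def errA (α : Finset ℝ) (h : α.Nonempty) : ℝ :=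
  ∑ j ∈ Finset.Icc 1 6, massA j * α.inf' h (fun a => ((j : ℝ) - a)^2)

/-!
With at most five points for the six atoms, two atoms `j ≠ k` share a nearest point `a`.
Every atom has mass at least `1/32` and `|j - k| ≥ 1`, so these two atoms alone contribute at
least `(1/32) · ((j - a)² + (k - a)²) ≥ (1/32) · (j - k)² / 2 ≥ 1/64`. The set `{1, 2, 3, 4, 11/2}`
leaves only the atoms `5` and `6`, each at distance `1/2` from `11/2`, costing exactly
`2 · (1/32) · (1/4) = 1/64`.
-/

lemma Finset.exists_ne_inf'_eq_of_card_lt {ι β γ : Type*} [LinearOrder γ] {s : Finset ι}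
    {t : Finset β} (ht : t.Nonempty) (hc : t.card < s.card) (f : ι → β → γ) :
    ∃ i ∈ s, ∃ j ∈ s, i ≠ j ∧ ∃ b ∈ t, t.inf' ht (f i) = f i b ∧ t.inf' ht (f j) = f j b := by
  choose g hg_mem hg_eq using fun i => t.exists_mem_eq_inf' ht (f i)
  obtain ⟨i, hi, j, hj, hij, hg⟩ :=
    Finset.exists_ne_map_eq_of_card_lt_of_maps_to hc (fun i _ => hg_mem i)
  exact ⟨i, hi, j, hj, hij, g i, hg_mem i, hg_eq i, hg ▸ hg_eq j⟩

lemma mul_sq_sub_div_two_le {c w v x y a : ℝ} (hc : 0 ≤ c) (hw : c ≤ w) (hv : c ≤ v) :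
    c * (x - y) ^ 2 / 2 ≤ w * (x - a) ^ 2 + v * (y - a) ^ 2 := by
  have hxy : (x - y) ^ 2 ≤ 2 * ((x - a) ^ 2 + (y - a) ^ 2) := by
    simpa [sub_sq_comm a y] using add_sq_le (a := x - a) (b := a - y)
  calc c * (x - y) ^ 2 / 2 ≤ c * (x - a) ^ 2 + c * (y - a) ^ 2 := by nlinarith
    _ ≤ w * (x - a) ^ 2 + v * (y - a) ^ 2 := by gcongr

lemma massA_nonneg (j : ℕ) : 0 ≤ massA j := by
  unfold massA; split <;> positivity

lemma one_div_thirtyTwo_le_massA {j : ℕ} (hj : j ∈ Finset.Icc 1 6) : (1 / 32 : ℝ) ≤ massA j := by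
  obtain ⟨hj1, hj6⟩ := Finset.mem_Icc.mp hj
  interval_cases j <;> norm_num [massA]

lemma one_le_sq_natCast_sub {j k : ℕ} (h : j ≠ k) : (1 : ℝ) ≤ ((j : ℝ) - k) ^ 2 := by
  rcases h.lt_or_gt with hlt | hlt
  · have : (j : ℝ) + 1 ≤ k := by exact_mod_cast hlt
    nlinarith
  · have : (k : ℝ) + 1 ≤ j := by exact_mod_cast hlt
    nlinarith

lemma one_div_sixtyFour_le_errA (α : Finset ℝ) (h : α.Nonempty) (hc : α.card ≤ 5) :
    1 / 64 ≤ errA α h := by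
  obtain ⟨j, hj, k, hk, hjk, a, -, hja, hka⟩ :=
    Finset.exists_ne_inf'_eq_of_card_lt h (s := Finset.Icc 1 6) (by rw [Nat.card_Icc]; omega)
      (fun (j : ℕ) (a : ℝ) => ((j : ℝ) - a) ^ 2)
  have hterm_nonneg : ∀ m ∈ Finset.Icc 1 6,
      0 ≤ massA m * α.inf' h (fun a => ((m : ℝ) - a) ^ 2) := fun m _ =>
    mul_nonneg (massA_nonneg m) (Finset.le_inf' h _ fun _ _ => sq_nonneg _)
  calc (1 / 64 : ℝ) ≤ 1 / 32 * ((j : ℝ) - k) ^ 2 / 2 := by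
        linarith [one_le_sq_natCast_sub hjk]
    _ ≤ massA j * ((j : ℝ) - a) ^ 2 + massA k * ((k : ℝ) - a) ^ 2 :=
        mul_sq_sub_div_two_le (by norm_num) (one_div_thirtyTwo_le_massA hj)
          (one_div_thirtyTwo_le_massA hk)
    _ = massA j * α.inf' h (fun a => ((j : ℝ) - a) ^ 2)
          + massA k * α.inf' h (fun a => ((k : ℝ) - a) ^ 2) := by
        rw [hja, hka]
    _ ≤ errA α h := Finset.add_le_sum hterm_nonneg hj hk hjk

lemma errA_optimal : errA {1, 2, 3, 4, 11/2} (by simp) = 1/64 := by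
  rw [errA, show Finset.Icc 1 6 = ({1, 2, 3, 4, 5, 6} : Finset ℕ) by decide]
  norm_num [Finset.inf'_insert, massA, min_def]

theorem stmt3 :
    sInf {v : ℝ | ∃ (α : Finset ℝ) (h : α.Nonempty), α.card ≤ 5 ∧ v = errA α h}
      = 1/64 ∧
    errA {1, 2, 3, 4, 11/2} (by simp) = 1/64 := by
  refine ⟨IsLeast.csInf_eq ⟨?_, ?_⟩, errA_optimal⟩
  · exact ⟨{1, 2, 3, 4, 11/2}, by simp, Finset.card_le_five, errA_optimal.symm⟩
  · rintro v ⟨α, h, hc, rfl⟩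
    exact one_div_sixtyFour_le_errA α h hc
end

section
/- Let P be the probability measure on ℝ supported on {1,…,6} with f(j) = (3/10)^{j−1}·(7/10) for j = 1,…,5 and f(6) = (3/10)^5. Then the third quantization error equals 4779999/100000000, attained at {1, 2, a} where a = E(X | X ∈ {3,4,5,6}). -/
/-- Mass function: f(j) = (3/10)^(j-1)·(7/10) for j = 1,…,5 and f(6) = (3/10)^5. -/
noncomputable def massB (j : ℕ) : ℝ := if j = 6 then (3/10)^5 else (3/10)^(j-1) * (7/10)

/-- Distortion error of a nonempty finite set α for the measure with mass `massB`. -/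
noncomputable def errB (α : Finset ℝ) (h : α.Nonempty) : ℝ :=
  ∑ j ∈ Finset.Icc 1 6, massB j * α.inf' h (fun a => ((j : ℝ) - a)^2)

/-- Conditional expectation E(X | X ∈ {k,…,l}). -/
noncomputable def avB (k l : ℕ) : ℝ :=
  (∑ j ∈ Finset.Icc k l, (j : ℝ) * massB j) / (∑ j ∈ Finset.Icc k l, massB j)


/-!
Assign each atom j to a nearest point of α. With |α| ≤ 3 this cuts {1,…,6} into at most three
clusters, and on each cluster the weighted squared error is at least the cluster's scatter about
its own conditional mean. The error of α is therefore bounded below by the least total scatter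
over all 3⁶ assignments, a finite computation; its minimum 0.04779999 belongs to the clusters
{1}, {2}, {3,…,6}, i.e. to α = {1, 2, E(X | X ∈ {3,…,6})}.
-/

open Finset

section Scatter

variable {ι κ K : Type*}

def scatter [Field K] (s : Finset ι) (w x : ι → K) : K :=
  ∑ i ∈ s, w i * (x i - (∑ i ∈ s, w i * x i) / ∑ i ∈ s, w i) ^ 2

theorem Rat.cast_scatter [Field K] [CharZero K] (s : Finset ι) (w x : ι → ℚ) :
    ((scatter s w x : ℚ) : K) = scatter s (fun i => (w i : K)) (fun i => (x i : K)) := by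
  simp [scatter]

variable [Field K] [LinearOrder K] [IsStrictOrderedRing K] {s : Finset ι} {w : ι → K}

theorem scatter_le_sum_mul_sq_sub (hw : ∀ i ∈ s, 0 ≤ w i) (x : ι → K) (t : K) :
    scatter s w x ≤ ∑ i ∈ s, w i * (x i - t) ^ 2 := by
  set W := ∑ i ∈ s, w i
  set m := (∑ i ∈ s, w i * x i) / W
  rcases (sum_nonneg hw).eq_or_lt with hW | hW
  · have hw0 : ∀ i ∈ s, w i = 0 := (sum_eq_zero_iff_of_nonneg hw).1 hW.symm
    exact le_of_eq <| sum_congr rfl fun i hi => by rw [hw0 i hi, zero_mul, zero_mul]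
  have hm : ∑ i ∈ s, w i * x i = W * m := (mul_div_cancel₀ _ hW.ne').symm
  have hexcess : ∑ i ∈ s, w i * (x i - t) ^ 2 = scatter s w x + W * (m - t) ^ 2 := by
    have hsplit : ∀ i ∈ s, w i * (x i - t) ^ 2 =
        w i * (x i - m) ^ 2 + 2 * (m - t) * (w i * x i) - 2 * (m - t) * m * w i
          + (m - t) ^ 2 * w i := fun i _ => by ring
    rw [sum_congr rfl hsplit, sum_add_distrib, sum_sub_distrib, sum_add_distrib, ← mul_sum,
      ← mul_sum, ← mul_sum, hm, show scatter s w x = ∑ i ∈ s, w i * (x i - m) ^ 2 from rfl]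
    ring
  rw [hexcess]
  nlinarith [sq_nonneg (m - t)]

theorem sum_scatter_fiber_le_sum_mul_sq_sub [Fintype κ] [DecidableEq κ]
    (hw : ∀ i ∈ s, 0 ≤ w i) (x : ι → K) (σ : ι → κ) (t : κ → K) :
    ∑ c, scatter {i ∈ s | σ i = c} w x ≤ ∑ i ∈ s, w i * (x i - t (σ i)) ^ 2 := by
  rw [← sum_fiberwise s σ]
  refine sum_le_sum fun c _ => ?_
  calc scatter {i ∈ s | σ i = c} w x ≤ ∑ i ∈ s with σ i = c, w i * (x i - t c) ^ 2 :=
        scatter_le_sum_mul_sq_sub (fun i hi => hw i (mem_filter.1 hi).1) x (t c)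
    _ = ∑ i ∈ s with σ i = c, w i * (x i - t (σ i)) ^ 2 :=
        sum_congr rfl fun i hi => by rw [(mem_filter.1 hi).2]

end Scatter

theorem Finset.exists_fin_inf'_eq {β γ : Type*} [LinearOrder γ] {α : Finset β} {n : ℕ}
    (h : α.Nonempty) (hn : α.card ≤ n) :
    ∃ t : Fin n → β, ∀ f : β → γ, ∃ c, α.inf' h f = f (t c) := by
  let e : α ↪ Fin n := α.equivFin.toEmbedding.trans (Fin.castLEEmb hn)
  refine ⟨Function.extend e Subtype.val fun _ => h.choose, fun f => ?_⟩
  obtain ⟨a, ha, hfa⟩ := exists_mem_eq_inf' h f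
  exact ⟨e ⟨a, ha⟩, by rw [e.injective.extend_apply, hfa]⟩

-- `massB` over `ℚ`, so that sums of it can be evaluated by `decide`
def massQ (j : ℕ) : ℚ := if j = 6 then (3/10)^5 else (3/10)^(j-1) * (7/10)

theorem massB_eq_cast (j : ℕ) : massB j = massQ j := by
  unfold massB massQ; split_ifs <;> norm_num

theorem massB_nonneg (j : ℕ) : 0 ≤ massB j := by
  unfold massB; split_ifs <;> positivity

theorem le_sum_scatter_fiber (σ : Fin 6 → Fin 3) :
    (4779999/100000000 : ℚ) ≤
      ∑ c, scatter {k | σ k = c} (fun k => massQ (k + 1)) (fun k => (k : ℚ) + 1) := by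
  revert σ
  decide +kernel

theorem errB_eq_sum_fin (α : Finset ℝ) (h : α.Nonempty) :
    errB α h = ∑ k : Fin 6, massB (k + 1) * α.inf' h (fun a => ((k : ℝ) + 1 - a) ^ 2) := by
  norm_num [errB, Fin.sum_univ_six, sum_Icc_succ_top]

theorem le_errB (α : Finset ℝ) (h : α.Nonempty) (hα : α.card ≤ 3) :
    4779999/100000000 ≤ errB α h := by
  obtain ⟨t, ht⟩ := exists_fin_inf'_eq h hα (γ := ℝ)
  choose σ hσ using fun k : Fin 6 => ht fun a => ((k : ℝ) + 1 - a) ^ 2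
  calc (4779999/100000000 : ℝ) = ((4779999/100000000 : ℚ) : ℝ) := by norm_num
    _ ≤ ∑ c, scatter {k | σ k = c} (fun k => massB (k + 1)) (fun k => (k : ℝ) + 1) := by
        simpa [Rat.cast_scatter, massB_eq_cast] using
          (Rat.cast_le (K := ℝ)).2 (le_sum_scatter_fiber σ)
    _ ≤ ∑ k : Fin 6, massB (k + 1) * ((k : ℝ) + 1 - t (σ k)) ^ 2 :=
        sum_scatter_fiber_le_sum_mul_sq_sub (fun k _ => massB_nonneg _) _ σ t
    _ = errB α h := by simp [errB_eq_sum_fin, hσ]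

theorem avB_three_six : avB 3 6 = 3417/1000 := by
  rw [avB, show Icc 3 6 = {3, 4, 5, 6} from rfl]
  norm_num [massB]

theorem errB_one_two_avB : errB {1, 2, avB 3 6} (by simp) = 4779999/100000000 := by
  rw [errB, show Icc 1 6 = {1, 2, 3, 4, 5, 6} from rfl, avB_three_six]
  norm_num [inf'_insert, massB, min_def]

theorem stmt5 :
    sInf {v : ℝ | ∃ (α : Finset ℝ) (h : α.Nonempty), α.card ≤ 3 ∧ v = errB α h}
      = 4779999/100000000 ∧
    errB {1, 2, avB 3 6} (by simp) = 4779999/100000000 := by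
  refine ⟨IsLeast.csInf_eq ⟨⟨_, by simp, card_le_three, errB_one_two_avB.symm⟩, ?_⟩,
    errB_one_two_avB⟩
  rintro v ⟨α, h, hα, rfl⟩
  exact le_errB α h hα
end
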